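/- Let a > 0 and let φ : [0,a] → ℝ be a concave, continuous, strictly increasing function with φ(0) = 0 and φ(a) = 1 which is not linear. Let ρ : [0,a] → ℝ be a measurable function with ∫₀^a ρ*(t) dφ(t) < ∞ whose support has Lebesgue measure strictly between 0 and a, i.e., 0 < m(supp ρ) < a. Then ∫₀^a ρ*(t) dφ(t) > −∫₀^a ρ*(t) dφ(a−t), where the right-hand side is the Lebesgue–Stieltjes integral of ρ* with respect to the decreasing function t ↦ φ(a−t); equivalently, ∫₀^a ρ*(t) φ′(t) dt > ∫₀^a ρ*(t) φ′(a−t) dt, where φ′ is the a.e.-defined derivative of φ. -/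

import Mathlib

open MeasureTheory Set Filter Topology
open scoped ENNReal NNReal Classical

noncomputable section

/-- The distribution function `m {s ∈ [0,a] : τ < ‖f s‖}` of `f` on `[0,a]`. -/
def distrib {E : Type*} [NormedAddCommGroup E] (a : ℝ) (f : ℝ → E) (τ : ℝ) : ℝ≥0∞ :=
  volume {s ∈ Set.Icc (0:ℝ) a | τ < ‖f s‖}

/-- The decreasing rearrangement `f*` of `f` on `[0,a]`:
`f*(t) = inf {τ ≥ 0 : m {s ∈ [0,a] : ‖f s‖ > τ} ≤ t}`. -/
def rearr {E : Type*} [NormedAddCommGroup E] (a : ℝ) (f : ℝ → E) (t : ℝ) : ℝ :=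
  sInf {τ : ℝ | 0 ≤ τ ∧ distrib a f τ ≤ ENNReal.ofReal t}

/-- The clamp of `t : ℝ` to the interval `[0,a]`. -/
def clampIcc (a t : ℝ) : ℝ := min (max t 0) a

lemma clampIcc_mem (a t : ℝ) (ha : 0 ≤ a) : clampIcc a t ∈ Set.Icc (0:ℝ) a :=
  ⟨le_min (le_max_right t 0) ha, min_le_right _ _⟩

lemma clampIcc_mono (a : ℝ) : Monotone (clampIcc a) := fun _ _ hst =>
  min_le_min (max_le_max hst le_rfl) le_rfl

lemma clampIcc_continuous (a : ℝ) : Continuous (clampIcc a) :=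
  (continuous_id.max continuous_const).min continuous_const

/-- The Stieltjes integrator associated with an increasing continuous function `φ` on `[0,a]`
(extended to all of `ℝ` as a constant outside `[0,a]`).  Its Lebesgue–Stieltjes measure
realizes the integrals `∫₀^a ⋯ dφ(t)`. -/
def stieltjesOfOn (φ : ℝ → ℝ) (a : ℝ) : StieltjesFunction ℝ :=
  if h : 0 ≤ a ∧ MonotoneOn φ (Set.Icc 0 a) ∧ ContinuousOn φ (Set.Icc 0 a) then
    { toFun := fun t => φ (clampIcc a t)
      mono' := fun s t hst =>
        h.2.1 (clampIcc_mem a s h.1) (clampIcc_mem a t h.1) (clampIcc_mono a hst)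
      right_continuous' := fun t =>
        ((h.2.2.comp_continuous (clampIcc_continuous a)
          (fun x => clampIcc_mem a x h.1)).continuousAt).continuousWithinAt }
  else StieltjesFunction.id

/-- The Lorentz space functional `‖f‖_{Λ(φ)} = ∫₀^a f*(t) dφ(t)` (with values in `ℝ≥0∞`). -/
def eLorentzNorm {E : Type*} [NormedAddCommGroup E] (φ : ℝ → ℝ) (a : ℝ) (f : ℝ → E) : ℝ≥0∞ :=
  ∫⁻ t in Set.Ioc (0:ℝ) a, ENNReal.ofReal (rearr a f t) ∂(stieltjesOfOn φ a).measure

/-- Membership in the Lorentz space `Λ(φ)[0,a]`. -/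
def MemLorentz {E : Type*} [NormedAddCommGroup E] [MeasurableSpace E]
    (φ : ℝ → ℝ) (a : ℝ) (f : ℝ → E) : Prop :=
  Measurable f ∧ eLorentzNorm φ a f < ⊤

/-- The Hardy–Lorentz space functional
`‖f‖_{H(Λ(φ))} = sup_{0 ≤ r < 1} ‖t ↦ f (r e^{it})‖_{Λ(φ)}` for functions on the unit disk. -/
def eHLNorm (φ : ℝ → ℝ) (f : ℂ → ℂ) : ℝ≥0∞ :=
  ⨆ r ∈ Set.Ico (0:ℝ) 1,
    eLorentzNorm φ (2 * Real.pi)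
      (fun t : ℝ => f (Complex.ofReal r * Complex.exp (Complex.I * Complex.ofReal t)))

/-- The classical `H¹` functional `‖f‖_{H¹} = sup_{0 ≤ r < 1} (1/(2π)) ∫₀^{2π} |f(r e^{it})| dt`. -/
def eH1Norm (f : ℂ → ℂ) : ℝ≥0∞ :=
  ⨆ r ∈ Set.Ico (0:ℝ) 1,
    (ENNReal.ofReal (2 * Real.pi))⁻¹ *
      ∫⁻ t in Set.Ioc (0:ℝ) (2 * Real.pi),
        ENNReal.ofReal ‖f (Complex.ofReal r * Complex.exp (Complex.I * Complex.ofReal t))‖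

/-- `fb` is the boundary (radial limit) function of `f`: for a.e. `t ∈ [0,2π]`,
`f(r e^{it}) → fb t` as `r → 1⁻`.  (For `f ∈ H¹` such a function exists and coincides a.e.
with the nontangential limit `f̃`.) -/
def HasRadialLimits (f : ℂ → ℂ) (fb : ℝ → ℂ) : Prop :=
  ∀ᵐ t ∂(volume.restrict (Set.Icc (0:ℝ) (2 * Real.pi))),
    Filter.Tendsto (fun r : ℝ => f (Complex.ofReal r * Complex.exp (Complex.I * Complex.ofReal t)))
      (nhdsWithin 1 (Set.Iio 1)) (nhds (fb t))

/-- `f` (with boundary function `fb`) is an outer function: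
`f` is non-null and `ln |f 0| = (1/(2π)) ∫₀^{2π} ln |fb s| ds`. -/
def IsOuter (f : ℂ → ℂ) (fb : ℝ → ℂ) : Prop :=
  (∃ z ∈ Metric.ball (0:ℂ) 1, f z ≠ 0) ∧
    Real.log ‖f 0‖ =
      (1 / (2 * Real.pi)) * ∫ s in Set.Ioc (0:ℝ) (2 * Real.pi), Real.log ‖fb s‖

/-- The set `E₊ = {t ∈ [0,a] : h t > 0}`. -/
def posSet (a : ℝ) (h : ℝ → ℝ) : Set ℝ := {t ∈ Set.Icc (0:ℝ) a | 0 < h t}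

/-- The set `E₋ = {t ∈ [0,a] : h t < 0}`. -/
def negSet (a : ℝ) (h : ℝ → ℝ) : Set ℝ := {t ∈ Set.Icc (0:ℝ) a | h t < 0}


/-!
By the layer-cake formula, `∫ ρ* dμ = ∫₀^∞ μ {ρ* > s} ds` for every measure `μ`. As `ρ*` is
decreasing, each superlevel set is an initial segment of `(0, a]` with some endpoint `c`; it has
mass `φ c` for `dφ(t)` and `1 - φ (a - c)` for `-dφ(a - t)`. Concavity puts `φ` above its chord
`t / a`, so `φ c + φ (a - c) ≥ 1`, strictly for `0 < c < a` since `φ` is not linear. For the levels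
`0 < s < ρ*(β / 2)`, where `β = m(supp ρ)`, the endpoint satisfies `β / 2 ≤ c ≤ β < a`, and this
range of levels has positive length.
-/

section Chord

variable {a : ℝ} {φ : ℝ → ℝ}

lemma concaveOn_sub_chord (hconc : ConcaveOn ℝ (Icc 0 a) φ) :
    ConcaveOn ℝ (Icc 0 a) (fun t => φ t - t / a) :=
  hconc.sub ((LinearMap.mulRight ℝ a⁻¹).convexOn (convex_Icc 0 a))

lemma div_le_of_concaveOn (ha : 0 < a) (hconc : ConcaveOn ℝ (Icc 0 a) φ)
    (hφ0 : φ 0 = 0) (hφa : φ a = 1) {t : ℝ} (ht : t ∈ Icc 0 a) : t / a ≤ φ t := by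
  have h := (concaveOn_sub_chord hconc).ge_on_segment (left_mem_Icc.2 ha.le)
    (right_mem_Icc.2 ha.le) (by rwa [segment_eq_Icc ha.le])
  simp only [hφ0, hφa, zero_div, div_self ha.ne', sub_self, min_self] at h
  linarith

lemma div_lt_of_concaveOn (ha : 0 < a) (hconc : ConcaveOn ℝ (Icc 0 a) φ)
    (hφ0 : φ 0 = 0) (hφa : φ a = 1) (hnonlin : ¬ ∀ t ∈ Icc (0:ℝ) a, φ t = t / a)
    {t : ℝ} (ht : t ∈ Ioo 0 a) : t / a < φ t := by
  push Not at hnonlin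
  obtain ⟨u, hu, hune⟩ := hnonlin
  have hu_lt : u / a < φ u := (div_le_of_concaveOn ha hconc hφ0 hφa hu).lt_of_ne hune.symm
  refine (div_le_of_concaveOn ha hconc hφ0 hφa (Ioo_subset_Icc_self ht)).lt_of_ne
    fun hzero => ?_
  -- `φ - chord` is concave, vanishes at `0`, `t` and `a`, and is positive at `u`
  rcases lt_or_gt_of_ne (show u ≠ t by rintro rfl; linarith) with hut | htu
  · have := (concaveOn_sub_chord hconc).lt_right_of_left_lt hu (right_mem_Icc.2 ha.le)
      (by rw [openSegment_eq_Ioo (hut.trans ht.2)]; exact ⟨hut, ht.2⟩)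
      (show φ t - t / a < φ u - u / a by linarith)
    simp only [hφa, div_self ha.ne'] at this
    linarith
  · have := (concaveOn_sub_chord hconc).left_lt_of_lt_right (left_mem_Icc.2 ha.le) hu
      (by rw [openSegment_eq_Ioo (ht.1.trans htu)]; exact ⟨ht.1, htu⟩)
      (show φ t - t / a < φ u - u / a by linarith)
    simp only [hφ0, zero_div] at this
    linarith

lemma one_sub_le_of_concaveOn (ha : 0 < a) (hconc : ConcaveOn ℝ (Icc 0 a) φ)
    (hφ0 : φ 0 = 0) (hφa : φ a = 1) {c : ℝ} (hc : c ∈ Icc 0 a) : 1 - φ (a - c) ≤ φ c := by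
  have h1 := div_le_of_concaveOn ha hconc hφ0 hφa hc
  have h2 := div_le_of_concaveOn ha hconc hφ0 hφa (t := a - c)
    ⟨by linarith [hc.2], by linarith [hc.1]⟩
  have : c / a + (a - c) / a = 1 := by field_simp; ring
  linarith

lemma one_sub_lt_of_concaveOn (ha : 0 < a) (hconc : ConcaveOn ℝ (Icc 0 a) φ)
    (hφ0 : φ 0 = 0) (hφa : φ a = 1) (hnonlin : ¬ ∀ t ∈ Icc (0:ℝ) a, φ t = t / a)
    {c : ℝ} (hc : c ∈ Ioo 0 a) : 1 - φ (a - c) < φ c := by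
  have h1 := div_lt_of_concaveOn ha hconc hφ0 hφa hnonlin hc
  have h2 := div_le_of_concaveOn ha hconc hφ0 hφa (t := a - c)
    ⟨by linarith [hc.2], by linarith [hc.1]⟩
  have : c / a + (a - c) / a = 1 := by field_simp; ring
  linarith

end Chord

lemma StieltjesFunction.measure_eq_of_Ioo_subset_of_subset_Ioc (F : StieltjesFunction ℝ)
    (hF : Continuous F) {x y : ℝ} {S : Set ℝ} (h₁ : Ioo x y ⊆ S) (h₂ : S ⊆ Ioc x y) :
    F.measure S = ENNReal.ofReal (F y - F x) := by
  refine le_antisymm (F.measure_Ioc x y ▸ measure_mono h₂) ?_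
  calc ENNReal.ofReal (F y - F x)
      = F.measure (Ioo x y) := by
        rw [F.measure_Ioo, hF.continuousAt.continuousWithinAt.leftLim_eq]
    _ ≤ F.measure S := measure_mono h₁

section StieltjesOfOn

variable {φ : ℝ → ℝ} {a : ℝ}

lemma stieltjesOfOn_apply (ha : 0 ≤ a) (hmono : MonotoneOn φ (Icc 0 a))
    (hcont : ContinuousOn φ (Icc 0 a)) (t : ℝ) :
    stieltjesOfOn φ a t = φ (clampIcc a t) := by
  simp only [stieltjesOfOn, dif_pos (⟨ha, hmono, hcont⟩ : 0 ≤ a ∧ _ ∧ _)]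

lemma continuous_stieltjesOfOn (ha : 0 ≤ a) (hmono : MonotoneOn φ (Icc 0 a))
    (hcont : ContinuousOn φ (Icc 0 a)) : Continuous (stieltjesOfOn φ a) := by
  rw [show ⇑(stieltjesOfOn φ a) = φ ∘ clampIcc a from
    funext (stieltjesOfOn_apply ha hmono hcont)]
  exact hcont.comp_continuous (clampIcc_continuous a) (fun t => clampIcc_mem a t ha)

lemma stieltjesOfOn_measure_eq (ha : 0 ≤ a) (hmono : MonotoneOn φ (Icc 0 a))
    (hcont : ContinuousOn φ (Icc 0 a)) {c : ℝ} (hc : c ∈ Icc 0 a) {S : Set ℝ}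
    (h₁ : Ioo 0 c ⊆ S) (h₂ : S ⊆ Ioc 0 c) :
    (stieltjesOfOn φ a).measure S = ENNReal.ofReal (φ c - φ 0) := by
  rw [StieltjesFunction.measure_eq_of_Ioo_subset_of_subset_Ioc _
    (continuous_stieltjesOfOn ha hmono hcont) h₁ h₂, stieltjesOfOn_apply ha hmono hcont,
    stieltjesOfOn_apply ha hmono hcont]
  simp [clampIcc, hc.1, hc.2, ha]

lemma stieltjesOfOn_reflect_measure_eq (ha : 0 ≤ a) (hmono : MonotoneOn φ (Icc 0 a))
    (hcont : ContinuousOn φ (Icc 0 a)) {c : ℝ} (hc : c ∈ Icc 0 a) {S : Set ℝ}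
    (h₁ : Ioo 0 c ⊆ S) (h₂ : S ⊆ Ioc 0 c) :
    (stieltjesOfOn (fun s => -φ (a - s)) a).measure S = ENNReal.ofReal (φ a - φ (a - c)) := by
  have hreflect : MapsTo (a - ·) (Icc 0 a) (Icc 0 a) :=
    fun t ht => ⟨sub_nonneg.2 ht.2, sub_le_self a ht.1⟩
  have hmono' : MonotoneOn (fun s => -φ (a - s)) (Icc 0 a) := fun s hs t ht hst =>
    neg_le_neg (hmono (hreflect ht) (hreflect hs) (sub_le_sub_left hst a))
  have hcont' : ContinuousOn (fun s => -φ (a - s)) (Icc 0 a) :=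
    (hcont.comp (continuous_const.sub continuous_id).continuousOn hreflect).neg
  rw [stieltjesOfOn_measure_eq ha hmono' hcont' hc h₁ h₂, sub_zero, neg_sub_neg]

end StieltjesOfOn

section Rearrangement

variable {E : Type*} [NormedAddCommGroup E] {a : ℝ} {f : ℝ → E}

lemma antitone_distrib : Antitone (distrib a f) :=
  fun _ _ hτ => measure_mono fun _ hs => ⟨hs.1, hτ.trans_lt hs.2⟩

lemma distrib_zero : distrib a f 0 = volume {t ∈ Icc 0 a | f t ≠ 0} := by
  simp [distrib]

lemma distrib_eq_iSup_add_inv (τ : ℝ) :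
    distrib a f τ = ⨆ n : ℕ, distrib a f (τ + 1 / (n + 1)) := by
  have hmono : Monotone fun n : ℕ => {s ∈ Icc 0 a | τ + 1 / ((n : ℝ) + 1) < ‖f s‖} :=
    fun m n hmn s hs =>
      ⟨hs.1, lt_of_le_of_lt (add_le_add_right (Nat.one_div_le_one_div hmn) τ) hs.2⟩
  simp only [distrib]
  rw [← hmono.measure_iUnion]
  congr 1
  ext s
  simp only [mem_iUnion, mem_ofPred_eq]
  refine ⟨fun hs => ?_, fun ⟨n, hs⟩ => ⟨hs.1, lt_of_le_of_lt (le_add_of_nonneg_right (by positivity)) hs.2⟩⟩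
  obtain ⟨n, hn⟩ := exists_nat_one_div_lt (sub_pos.2 hs.2)
  exact ⟨n, hs.1, by linarith⟩

lemma rearr_nonneg (t : ℝ) : 0 ≤ rearr a f t :=
  Real.sInf_nonneg fun _ hτ => hτ.1

lemma rearr_eq_zero_of_distrib_zero_le {t : ℝ} (h : distrib a f 0 ≤ ENNReal.ofReal t) :
    rearr a f t = 0 :=
  le_antisymm (csInf_le ⟨0, fun _ hτ => hτ.1⟩ ⟨le_rfl, h⟩) (rearr_nonneg t)

variable [MeasurableSpace E] [OpensMeasurableSpace E]

lemma exists_nonneg_distrib_le (hf : Measurable f) {t : ℝ} (ht : 0 < t) :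
    ∃ τ, 0 ≤ τ ∧ distrib a f τ ≤ ENNReal.ofReal t := by
  have hlevel : ∀ n : ℕ, MeasurableSet {s ∈ Icc 0 a | (n : ℝ) < ‖f s‖} := fun n =>
    measurableSet_Icc.inter (measurableSet_lt measurable_const hf.norm)
  have hanti : Antitone fun n : ℕ => {s ∈ Icc 0 a | (n : ℝ) < ‖f s‖} :=
    fun m n hmn s hs => ⟨hs.1, lt_of_le_of_lt (Nat.cast_le.2 hmn) hs.2⟩
  have hempty : ⋂ n : ℕ, {s ∈ Icc 0 a | (n : ℝ) < ‖f s‖} = ∅ := by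
    refine eq_empty_of_forall_notMem fun s hs => ?_
    obtain ⟨n, hn⟩ := exists_nat_gt ‖f s‖
    exact (mem_iInter.1 hs n).2.not_gt hn
  have hfin : volume {s ∈ Icc 0 a | ((0 : ℕ) : ℝ) < ‖f s‖} ≠ ⊤ :=
    measure_ne_top_of_subset (fun _ hs => hs.1) (by simp)
  have htendsto : Tendsto (fun n : ℕ => distrib a f n) atTop (𝓝 0) := by
    have := tendsto_measure_iInter_atTop (fun n => (hlevel n).nullMeasurableSet) hanti ⟨0, hfin⟩
    rwa [hempty, measure_empty] at this
  obtain ⟨n, hn⟩ := (htendsto.eventually_lt_const (ENNReal.ofReal_pos.2 ht)).exists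
  exact ⟨n, n.cast_nonneg, hn.le⟩

lemma antitoneOn_rearr (hf : Measurable f) : AntitoneOn (rearr a f) (Ioi 0) :=
  fun _ hs _ _ hst => csInf_le_csInf ⟨0, fun _ hτ => hτ.1⟩ (exists_nonneg_distrib_le hf hs)
    fun _ hτ => ⟨hτ.1, hτ.2.trans (ENNReal.ofReal_le_ofReal hst)⟩

lemma distrib_rearr_le (hf : Measurable f) {t : ℝ} (ht : 0 < t) :
    distrib a f (rearr a f t) ≤ ENNReal.ofReal t := by
  rw [distrib_eq_iSup_add_inv]
  refine iSup_le fun n => ?_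
  obtain ⟨τ, hτ, hτlt⟩ := exists_lt_of_csInf_lt (exists_nonneg_distrib_le hf ht)
    (lt_add_of_pos_right (rearr a f t) (Nat.one_div_pos_of_nat (n := n)))
  exact (antitone_distrib hτlt.le).trans hτ.2

lemma rearr_pos (hf : Measurable f) {t : ℝ} (ht : 0 < t)
    (hsupp : ENNReal.ofReal t < distrib a f 0) : 0 < rearr a f t := by
  refine (rearr_nonneg t).lt_of_ne fun hzero => hsupp.not_ge ?_
  simpa [← hzero] using distrib_rearr_le (a := a) hf ht

lemma exists_rearr_pos_and_rearr_eq_zero (hf : Measurable f)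
    (hsupp0 : 0 < volume {t ∈ Icc 0 a | f t ≠ 0})
    (hsuppa : volume {t ∈ Icc 0 a | f t ≠ 0} < ENNReal.ofReal a) :
    ∃ t₀ b, 0 < t₀ ∧ t₀ < b ∧ b < a ∧ 0 < rearr a f t₀ ∧ rearr a f b = 0 := by
  set β := (volume {t ∈ Icc 0 a | f t ≠ 0}).toReal
  have hβ : distrib a f 0 = ENNReal.ofReal β := by
    rw [distrib_zero, ENNReal.ofReal_toReal (hsuppa.trans ENNReal.ofReal_lt_top).ne]
  have hβpos : 0 < β := ENNReal.toReal_pos hsupp0.ne' (hsuppa.trans ENNReal.ofReal_lt_top).ne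
  refine ⟨β / 2, β, half_pos hβpos, half_lt_self hβpos, ENNReal.toReal_lt_of_lt_ofReal hsuppa,
    rearr_pos hf (half_pos hβpos) ?_, rearr_eq_zero_of_distrib_zero_le hβ.le⟩
  exact hβ ▸ ENNReal.ofReal_lt_ofReal_iff'.2 ⟨half_lt_self hβpos, hβpos⟩

end Rearrangement

lemma exists_Ioo_subset_subset_Ioc {a : ℝ} (ha : 0 ≤ a) {S : Set ℝ} (hS : S ⊆ Ioc 0 a)
    (hdown : ∀ t ∈ S, Ioc 0 t ⊆ S) : ∃ c ∈ Icc 0 a, Ioo 0 c ⊆ S ∧ S ⊆ Ioc 0 c := by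
  have hbdd : BddAbove S := ⟨a, fun t ht => (hS ht).2⟩
  refine ⟨sSup S, ⟨Real.sSup_nonneg fun t ht => (hS ht).1.le, Real.sSup_le
    (fun t ht => (hS ht).2) ha⟩, fun t ht => ?_, fun t ht => ⟨(hS ht).1, le_csSup hbdd ht⟩⟩
  rcases S.eq_empty_or_nonempty with rfl | hne
  · simp at ht
  obtain ⟨u, hu, htu⟩ := exists_lt_of_lt_csSup hne ht.2
  exact hdown u hu ⟨ht.1, htu.le⟩

theorem lintegral_lt_lintegral_of_antitoneOn {a b t₀ : ℝ} {g : ℝ → ℝ} {F G : ℝ → ℝ≥0∞}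
    {μ ν : Measure ℝ} (hg : AntitoneOn g (Ioc 0 a)) (hg_nonneg : ∀ t ∈ Ioc 0 a, 0 ≤ g t)
    (ht₀ : 0 < t₀) (ht₀b : t₀ < b) (hba : b < a) (hgt₀ : 0 < g t₀) (hgb : g b ≤ 0)
    (hμ : ∀ c ∈ Icc 0 a, ∀ S, Ioo 0 c ⊆ S → S ⊆ Ioc 0 c → μ S = F c)
    (hν : ∀ c ∈ Icc 0 a, ∀ S, Ioo 0 c ⊆ S → S ⊆ Ioc 0 c → ν S = G c)
    (hGF : ∀ c ∈ Icc 0 a, G c ≤ F c) (hGF' : ∀ c ∈ Ioo 0 a, G c < F c)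
    (hfin : ∫⁻ t in Ioc 0 a, ENNReal.ofReal (g t) ∂μ ≠ ∞) :
    ∫⁻ t in Ioc 0 a, ENNReal.ofReal (g t) ∂ν < ∫⁻ t in Ioc 0 a, ENNReal.ofReal (g t) ∂μ := by
  have ha : 0 ≤ a := (ht₀.trans (ht₀b.trans hba)).le
  have hlayer : ∀ κ : Measure ℝ, ∫⁻ t in Ioc 0 a, ENNReal.ofReal (g t) ∂κ
      = ∫⁻ s in Ioi 0, κ ({t | s < g t} ∩ Ioc 0 a) := fun κ => by
    rw [lintegral_eq_lintegral_meas_lt _ ((ae_restrict_iff' measurableSet_Ioc).2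
      (.of_forall hg_nonneg)) (aemeasurable_restrict_of_antitoneOn measurableSet_Ioc hg)]
    simp_rw [Measure.restrict_apply' measurableSet_Ioc]
  have hdown : ∀ s, ∀ t ∈ {t | s < g t} ∩ Ioc 0 a, Ioc 0 t ⊆ {t | s < g t} ∩ Ioc 0 a :=
    fun s t ht u hu => ⟨ht.1.trans_le (hg ⟨hu.1, hu.2.trans ht.2.2⟩ ht.2 hu.2),
      hu.1, hu.2.trans ht.2.2⟩
  choose c hc hc₁ hc₂ using fun s =>
    exists_Ioo_subset_subset_Ioc ha inter_subset_right (hdown s)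
  have hle : ∀ s, ν ({t | s < g t} ∩ Ioc 0 a) ≤ μ ({t | s < g t} ∩ Ioc 0 a) := fun s => by
    rw [hμ _ (hc s) _ (hc₁ s) (hc₂ s), hν _ (hc s) _ (hc₁ s) (hc₂ s)]
    exact hGF _ (hc s)
  have hlt : ∀ s ∈ Ioo 0 (g t₀),
      ν ({t | s < g t} ∩ Ioc 0 a) < μ ({t | s < g t} ∩ Ioc 0 a) := fun s hs => by
    have hct₀ : t₀ ≤ c s :=
      (hc₂ s (⟨hs.2, ht₀, (ht₀b.trans hba).le⟩ : t₀ ∈ {t | s < g t} ∩ Ioc 0 a)).2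
    have hcb : c s ≤ b := not_lt.1 fun hbc =>
      (hs.1.trans (hc₁ s (⟨ht₀.trans ht₀b, hbc⟩ : b ∈ Ioo 0 (c s))).1).not_ge hgb
    rw [hμ _ (hc s) _ (hc₁ s) (hc₂ s), hν _ (hc s) _ (hc₁ s) (hc₂ s)]
    exact hGF' _ ⟨ht₀.trans_le hct₀, hcb.trans_lt hba⟩
  rw [hlayer, hlayer]
  refine lintegral_strict_mono_of_ae_le_of_ae_lt_on ?_ ?_ (.of_forall hle) (s := Ioo 0 (g t₀))
    ?_ (.of_forall hlt)
  · refine (Antitone.measurable fun s s' hss' => measure_mono ?_).aemeasurable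
    exact fun t ht => ⟨hss'.trans_lt ht.1, ht.2⟩
  · exact ne_top_of_le_ne_top (hlayer μ ▸ hfin) (lintegral_mono hle)
  · rw [Measure.restrict_apply' measurableSet_Ioi, inter_eq_left.2 fun s hs => hs.1]
    simpa using hgt₀

/-- Let `φ` be a nonlinear, strictly increasing, concave, continuous
function on `[0,a]` with `φ 0 = 0`, `φ a = 1`, and let `ρ : [0,a] → ℝ` be measurable with
`∫₀^a ρ* dφ < ∞` and `0 < m(supp ρ) < a`.  Then
`∫₀^a ρ*(t) dφ(t) > −∫₀^a ρ*(t) dφ(a−t)`; here the right-hand side is expressed as the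
Lebesgue–Stieltjes integral of `ρ*` with respect to the increasing function `t ↦ −φ(a−t)`. -/
theorem rearr_stieltjes_reflection_inequality (a : ℝ) (ha : 0 < a) (φ : ℝ → ℝ)
    (hconc : ConcaveOn ℝ (Set.Icc 0 a) φ)
    (hcont : ContinuousOn φ (Set.Icc 0 a))
    (hmono : StrictMonoOn φ (Set.Icc 0 a))
    (hφ0 : φ 0 = 0) (hφa : φ a = 1)
    (hnonlin : ¬ ∀ t ∈ Set.Icc (0:ℝ) a, φ t = t / a)
    (ρ : ℝ → ℝ) (hρ : Measurable ρ)
    (hρmem : eLorentzNorm φ a ρ < ⊤)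
    (hsupp0 : 0 < volume {t ∈ Set.Icc (0:ℝ) a | ρ t ≠ 0})
    (hsuppa : volume {t ∈ Set.Icc (0:ℝ) a | ρ t ≠ 0} < ENNReal.ofReal a) :
    (∫⁻ t in Set.Ioc (0:ℝ) a, ENNReal.ofReal (rearr a ρ t)
        ∂(stieltjesOfOn (fun s => -φ (a - s)) a).measure)
      < ∫⁻ t in Set.Ioc (0:ℝ) a, ENNReal.ofReal (rearr a ρ t)
          ∂(stieltjesOfOn φ a).measure := by
  obtain ⟨t₀, b, ht₀, ht₀b, hba, hpos, hzero⟩ :=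
    exists_rearr_pos_and_rearr_eq_zero hρ hsupp0 hsuppa
  refine lintegral_lt_lintegral_of_antitoneOn (F := fun c => ENNReal.ofReal (φ c))
    (G := fun c => ENNReal.ofReal (1 - φ (a - c)))
    ((antitoneOn_rearr hρ).mono Ioc_subset_Ioi_self) (fun t _ => rearr_nonneg t)
    ht₀ ht₀b hba hpos hzero.le ?_ ?_ ?_ ?_ hρmem.ne
  · intro c hc S h₁ h₂
    rw [stieltjesOfOn_measure_eq ha.le hmono.monotoneOn hcont hc h₁ h₂, hφ0, sub_zero]
  · intro c hc S h₁ h₂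
    rw [stieltjesOfOn_reflect_measure_eq ha.le hmono.monotoneOn hcont hc h₁ h₂, hφa]
  · exact fun c hc => ENNReal.ofReal_le_ofReal (one_sub_le_of_concaveOn ha hconc hφ0 hφa hc)
  · exact fun c hc => ENNReal.ofReal_lt_ofReal_iff'.2
      ⟨one_sub_lt_of_concaveOn ha hconc hφ0 hφa hnonlin hc,
        (div_pos hc.1 ha).trans (div_lt_of_concaveOn ha hconc hφ0 hφa hnonlin hc)⟩

end
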